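/- Let n be a positive integer. If 3 divides n, then τ(n+1) ≡ R_9(n/3) (mod 3); if 3 does not divide n, then τ(n+1) ≡ 0 (mod 3). -/

import Mathlib

open PowerSeries Finset

/-- `1 - X^(m+1)` is a unit in `ℤ⟦X⟧`. -/
lemma isUnit_one_sub_X_pow (m : ℕ) :
    IsUnit ((1 : PowerSeries ℤ) - (PowerSeries.X : PowerSeries ℤ) ^ (m + 1)) := by
  rw [PowerSeries.isUnit_iff_constantCoeff]
  simp

/-- `tau k n` is the coefficient of `q^n` in `q·∏_{m=1}^∞ (1-q^m)^k` (`k : ℤ`).  Since each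
factor `(1-q^m)^(±|k|)` is `1 + (terms of degree ≥ m)`, the coefficient of `q^(n-1)` in the
infinite product agrees with that of the finite product `∏_{m=1}^{n} (1-q^m)^k`, computed in
the unit group of `ℤ⟦X⟧` (so that negative exponents make sense). -/
noncomputable def tau (k : ℤ) (n : ℕ) : ℤ :=
  PowerSeries.coeff (R := ℤ) (n - 1)
    ((↑(∏ m ∈ Finset.range n, (isUnit_one_sub_X_pow m).unit ^ k) : PowerSeries ℤ))

/-- `regularPartitions t n` is the number of `t`-regular partitions of `n`, i.e. partitions of
`n` none of whose parts is divisible by `t`. -/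
noncomputable def regularPartitions (t n : ℕ) : ℕ :=
  Nat.card {p : n.Partition // ∀ a ∈ p.parts, ¬ t ∣ a}

/-!
Modulo 3 the Frobenius gives `∏ (1 - q^m)^24 = (∏ (1 - q^m)^8)^3 = ∏ (1 - q^(3m))^8`, so only
exponents divisible by 3 survive, and the coefficient of `q^(3N)` is that of `q^N` in
`∏ (1 - q^m)^8`. In characteristic 3, `(1 - x)^8 = (1 - x^9)/(1 - x) = 1 + x + ⋯ + x^8`, so this
product generates the partitions in which every part occurs fewer than 9 times; by Glaisher's
theorem these are equinumerous with the 9-regular partitions.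
-/

open scoped PowerSeries.WithPiTopology

instance PowerSeries.charP {R : Type*} [Semiring R] (p : ℕ) [CharP R p] : CharP R⟦X⟧ p :=
  charP_of_injective_ringHom C_injective p

theorem one_sub_pow_expChar_pow_sub_one {R : Type*} [CommRing R] [IsDomain R] (p : ℕ)
    [ExpChar R p] (e : ℕ) {x : R} (hx : x ≠ 1) :
    (1 - x) ^ (p ^ e - 1) = ∑ j ∈ range (p ^ e), x ^ j := by
  refine mul_right_cancel₀ (sub_ne_zero.mpr hx.symm) ?_
  rw [← pow_succ, Nat.sub_add_cancel (Nat.one_le_pow _ _ (expChar_pos R p)),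
    sub_pow_expChar_pow, one_pow, geom_sum_mul_neg]

theorem ZMod.powerSeries_expand_card (p : ℕ) [Fact p.Prime] (f : (ZMod p)⟦X⟧) :
    expand p (Fact.out : p.Prime).ne_zero f = f ^ p := by
  have := MvPowerSeries.map_frobenius_expand (σ := Unit) p (Fact.out : p.Prime).ne_zero (f := f)
  rwa [ZMod.frobenius_zmod, MvPowerSeries.map_id] at this

namespace PowerSeries

variable {R : Type*} [CommRing R]

theorem coeff_prod_eq_of_subset {ι : Type*} [DecidableEq ι] {s t : Finset ι} {f : ι → R⟦X⟧}
    {N : ℕ} (hst : s ⊆ t) (h : ∀ i ∈ t \ s, X ^ (N + 1) ∣ f i - 1) :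
    coeff N (∏ i ∈ t, f i) = coeff N (∏ i ∈ s, f i) := by
  set I := Ideal.span {(X : R⟦X⟧) ^ (N + 1)}
  have hI : ∀ a b, Ideal.Quotient.mk I a = Ideal.Quotient.mk I b → coeff N a = coeff N b := by
    intro a b hab
    rw [Ideal.Quotient.eq, Ideal.mem_span_singleton, X_pow_dvd_iff] at hab
    simpa [sub_eq_zero] using hab N N.lt_succ_self
  refine hI _ _ ?_
  rw [map_prod, map_prod]
  refine (prod_subset hst fun i hit his => ?_).symm
  rw [← map_one (Ideal.Quotient.mk I), Ideal.Quotient.eq, Ideal.mem_span_singleton]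
  exact h i (mem_sdiff.mpr ⟨hit, his⟩)

theorem coeff_prod_range_eq_of_hasProd [TopologicalSpace R] [DiscreteTopology R]
    {f : ℕ → R⟦X⟧} {a : R⟦X⟧} (hf : HasProd f a) {N M : ℕ}
    (h : ∀ m ≥ M, X ^ (N + 1) ∣ f m - 1) :
    coeff N (∏ m ∈ range M, f m) = coeff N a := by
  have hlim : ∀ᶠ K in Filter.atTop, coeff N (∏ m ∈ range K, f m) = coeff N a := by
    have := ((WithPiTopology.continuous_coeff R N).tendsto a).comp hf.tendsto_prod_nat
    rwa [nhds_discrete, Filter.tendsto_pure] at this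
  obtain ⟨K, hK, hMK⟩ := (hlim.and (Filter.eventually_ge_atTop M)).exists
  rw [← hK, coeff_prod_eq_of_subset (range_subset_range.mpr hMK)]
  intro m hm
  simp only [mem_sdiff, mem_range, not_lt] at hm
  exact h m hm.2

end PowerSeries

open PowerSeries

theorem coeff_prod_one_sub_X_pow_pow_eq_card_countRestricted (p : ℕ) [Fact p.Prime] (e : ℕ)
    {N M : ℕ} (hNM : N ≤ M) :
    coeff N (∏ m ∈ range M, ((1 : (ZMod p)⟦X⟧) - X ^ (m + 1)) ^ (p ^ e - 1)) =
      (#(Nat.Partition.countRestricted N (p ^ e)) : ZMod p) := by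
  have hfactor : ∀ m, ((1 : (ZMod p)⟦X⟧) - X ^ (m + 1)) ^ (p ^ e - 1) =
      ∑ j ∈ range (p ^ e), X ^ ((m + 1) * j) := by
    intro m
    rw [one_sub_pow_expChar_pow_sub_one p e]
    · simp_rw [pow_mul]
    · intro h
      simpa using congrArg (coeff 0) h
  have hprod : HasProd (fun m => ((1 : (ZMod p)⟦X⟧) - X ^ (m + 1)) ^ (p ^ e - 1))
      (PowerSeries.mk fun n => (#(Nat.Partition.countRestricted n (p ^ e)) : ZMod p)) := by
    simp_rw [hfactor]
    exact Nat.Partition.hasProd_powerSeriesMk_card_countRestricted _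
      (pow_pos (Fact.out : p.Prime).pos e)
  rw [coeff_prod_range_eq_of_hasProd hprod, coeff_mk]
  intro m hm
  have hX : X ^ (N + 1) ∣ (1 - X ^ (m + 1) : (ZMod p)⟦X⟧) - 1 := by
    rw [sub_sub_cancel_left, dvd_neg]
    exact pow_dvd_pow _ (by omega)
  simpa using hX.trans (sub_dvd_pow_sub_pow _ 1 (p ^ e - 1))

theorem tau_natCast_add_one (k n : ℕ) :
    tau k (n + 1) = coeff n (∏ m ∈ range (n + 1), ((1 : ℤ⟦X⟧) - X ^ (m + 1)) ^ k) := by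
  rw [tau, Nat.add_sub_cancel, Units.coe_prod]
  refine congrArg _ (prod_congr rfl fun m _ => ?_)
  rw [zpow_natCast, Units.val_pow_eq_pow_val, IsUnit.unit_spec]

theorem regularPartitions_eq_card_restricted (t n : ℕ) :
    regularPartitions t n = #(Nat.Partition.restricted n (¬ t ∣ ·)) := by
  rw [regularPartitions, Nat.card_eq_fintype_card, Fintype.card_subtype]
  rfl

theorem ramanujanTau_modEq_three_general (n : ℕ) :
    (3 ∣ n → tau 24 (n + 1) ≡ (regularPartitions 9 (n / 3) : ℤ) [ZMOD 3]) ∧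
    (¬ 3 ∣ n → tau 24 (n + 1) ≡ 0 [ZMOD 3]) := by
  have hτ : (tau 24 (n + 1) : ZMod 3) =
      coeff n (expand 3 three_ne_zero
        (∏ m ∈ range (n + 1), ((1 : (ZMod 3)⟦X⟧) - X ^ (m + 1)) ^ (3 ^ 2 - 1))) := by
    rw [ZMod.powerSeries_expand_card, ← prod_pow, ← Nat.cast_ofNat (R := ℤ) (n := 24),
      tau_natCast_add_one, ← eq_intCast (Int.castRingHom _), ← coeff_map]
    simp [map_prod, ← pow_mul]
  rw [coeff_expand, coeff_prod_one_sub_X_pow_pow_eq_card_countRestricted 3 2 (by omega),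
    ← Nat.Partition.card_restricted_eq_card_countRestricted _ (by norm_num),
    ← regularPartitions_eq_card_restricted] at hτ
  constructor <;> intro h <;> refine (ZMod.intCast_eq_intCast_iff _ _ 3).mp ?_ <;> simp [hτ, h]

/-- If `3 ∣ n` then `τ(n+1) ≡ R₉(n/3) (mod 3)`, and otherwise `τ(n+1) ≡ 0 (mod 3)`.
Here `τ = τ₂₄` is Ramanujan's tau function. -/
theorem ramanujanTau_modEq_three (n : ℕ) (hn : 0 < n) :
    (3 ∣ n → tau 24 (n + 1) ≡ (regularPartitions 9 (n / 3) : ℤ) [ZMOD 3]) ∧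
    (¬ 3 ∣ n → tau 24 (n + 1) ≡ 0 [ZMOD 3]) :=
  ramanujanTau_modEq_three_general n
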